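/- arXiv:2302.07745 — 2 statements merged into one kernel-verified Lean document; each statement's English description precedes it below -/
import Mathlib

section
/- Let m ∈ ℕ, p ∈ (0,2], λ ∈ (0,∞), and let R_{λ,m} be the minimal root in [0,1] of p(1−r^m)/(1+r^m) − 2λr/(1−r) = 0. Then for every r with R_{λ,m} < r < 1 there exist f ∈ ℬ (with coefficients a_n), ω ∈ ℬ_m, and z ∈ 𝔻 with |z| = r such that |f(ω(z))|^p + λ·[Σ_{n=1}^∞ |a_n|r^n + (1/(1+|a₀|) + r/(1−r))·Σ_{n=1}^∞ |a_n|²r^{2n}] > 1; in fact one may take ω(z) = z^m and f(z) = (z+a)/(1+az) for any a ∈ [0,1). -/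
/-!
For the Möbius maps `f_a(z) = (z + a) / (1 + a z)` with `a ∈ [0, 1)`, `ω(z) = z ^ m` and `z = r`,
every quantity in the inequality is an explicit geometric series, so its left-hand side is a
smooth function `Φ(a)` with `Φ(1) = 1` and `Φ'(1) = p (1 - r^m) / (1 + r^m) - 2λ r / (1 - r)`.
This is the function defining `R_{λ,m}`; it is strictly decreasing in `r` and vanishes at `R`, so
`Φ'(1) < 0` for `r > R`, and therefore `Φ(a) > 1` for `a` slightly below `1`.
-/

open Set Topology

theorem HasDerivAt.exists_lt_of_deriv_neg_left {f : ℝ → ℝ} {f' x b : ℝ} (hf : HasDerivAt f f' x)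
    (hf' : f' < 0) (hb : b < x) : ∃ y ∈ Ioo b x, f x < f y := by
  have hslope : ∀ᶠ y in 𝓝[<] x, slope f x y < 0 := by
    simpa using hf.hasDerivWithinAt.limsup_slope_le (s := Iio x) hf'
  obtain ⟨y, hy, hyb, hyx⟩ := (hslope.and (Ioo_mem_nhdsLT hb)).exists
  rw [slope_comm, slope_neg_iff_of_le hyx.le] at hy
  exact ⟨y, ⟨hyb, hyx⟩, hy⟩

theorem strictAntiOn_radiusEquation (m : ℕ) {p lam : ℝ} (hp : 0 ≤ p) (hlam : 0 < lam) :
    StrictAntiOn (fun r : ℝ => p * ((1 - r ^ m) / (1 + r ^ m)) - 2 * lam * (r / (1 - r)))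
      (Ico 0 1) := by
  intro s ⟨hs0, hs1⟩ r ⟨hr0, hr1⟩ hsr
  have hpow : s ^ m ≤ r ^ m := pow_le_pow_left₀ hs0 hsr.le m
  have hs_pow : 0 ≤ s ^ m := pow_nonneg hs0 m
  have h1 : (1 - r ^ m) / (1 + r ^ m) ≤ (1 - s ^ m) / (1 + s ^ m) := by
    rw [div_le_div_iff₀ (by positivity) (by positivity)]
    nlinarith
  have h2 : s / (1 - s) < r / (1 - r) := by
    rw [div_lt_div_iff₀ (by linarith) (by linarith)]
    nlinarith
  have := mul_le_mul_of_nonneg_left h1 hp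
  have := mul_lt_mul_of_pos_left h2 (mul_pos two_pos hlam)
  dsimp only
  linarith

def mobiusCoeff (a : ℂ) : ℕ → ℂ
  | 0 => a
  | k + 1 => (1 - a ^ 2) * (-a) ^ k

theorem hasSum_mobiusCoeff {a w : ℂ} (ha : ‖a‖ ≤ 1) (hw : ‖w‖ < 1) :
    HasSum (fun n => mobiusCoeff a n * w ^ n) ((w + a) / (1 + a * w)) := by
  have haw : ‖-a * w‖ < 1 := by
    rw [norm_mul, norm_neg]
    nlinarith [norm_nonneg w, norm_nonneg a]
  have hden : 1 + a * w ≠ 0 := by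
    intro h
    rw [show -a * w = 1 by linear_combination -h] at haw
    simp at haw
  have htail : HasSum (fun n => mobiusCoeff a (n + 1) * w ^ (n + 1))
      ((1 - a ^ 2) * w * (1 - -a * w)⁻¹) := by
    refine ((hasSum_geometric_of_norm_lt_one haw).mul_left ((1 - a ^ 2) * w)).congr_fun
      fun n => ?_
    rw [mobiusCoeff]
    ring
  have hhead : (w + a) / (1 + a * w) - mobiusCoeff a 0 * w ^ 0
      = (1 - a ^ 2) * w * (1 - -a * w)⁻¹ := by
    rw [mobiusCoeff, neg_mul, sub_neg_eq_add, pow_zero, mul_one, div_eq_mul_inv]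
    linear_combination a * mul_inv_cancel₀ hden
  rw [← hasSum_nat_add_iff' 1, Finset.sum_range_one, hhead]
  exact htail

theorem norm_mobius_le_one {a : ℝ} (ha : |a| ≤ 1) {w : ℂ} (hw : ‖w‖ < 1) :
    ‖(w + a) / (1 + a * w)‖ ≤ 1 := by
  have hsq : 0 ≤ (1 - a ^ 2) * (1 - ‖w‖ ^ 2) :=
    mul_nonneg (by nlinarith [abs_nonneg a, sq_abs a]) (by nlinarith [norm_nonneg w])
  have key : ‖1 + a * w‖ ^ 2 - ‖w + a‖ ^ 2 = (1 - a ^ 2) * (1 - ‖w‖ ^ 2) := by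
    simp only [Complex.sq_norm, Complex.normSq_apply, Complex.add_re, Complex.add_im,
      Complex.mul_re, Complex.mul_im, Complex.one_re, Complex.one_im, Complex.ofReal_re,
      Complex.ofReal_im]
    ring
  rw [norm_div]
  apply div_le_one_of_le₀ _ (norm_nonneg _)
  exact (pow_le_pow_iff_left₀ (norm_nonneg _) (norm_nonneg _) two_ne_zero).mp (by linarith)

section RealParameter

variable {a r : ℝ}

theorem norm_mobiusCoeff_succ (ha0 : 0 ≤ a) (ha1 : a ≤ 1) (n : ℕ) :
    ‖mobiusCoeff a (n + 1)‖ = (1 - a ^ 2) * a ^ n := by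
  have : mobiusCoeff a (n + 1) = ((1 - a ^ 2) * (-a) ^ n : ℝ) := by
    simp [mobiusCoeff]
  rw [this, Complex.norm_real, norm_mul, norm_pow, norm_neg, Real.norm_of_nonneg ha0,
    Real.norm_of_nonneg (by nlinarith)]

theorem tsum_norm_mobiusCoeff_mul_pow (ha0 : 0 ≤ a) (ha1 : a ≤ 1) (hr0 : 0 ≤ r) (hr1 : r < 1) :
    ∑' n : ℕ, ‖mobiusCoeff a (n + 1)‖ * r ^ (n + 1) = (1 - a ^ 2) * r / (1 - a * r) := by
  have hterm (n : ℕ) :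
      ‖mobiusCoeff a (n + 1)‖ * r ^ (n + 1) = (1 - a ^ 2) * r * (a * r) ^ n := by
    rw [norm_mobiusCoeff_succ ha0 ha1]
    ring
  rw [tsum_congr hterm, tsum_mul_left, tsum_geometric_of_lt_one (by positivity) (by nlinarith),
    div_eq_mul_inv]

theorem tsum_sq_norm_mobiusCoeff_mul_pow (ha0 : 0 ≤ a) (ha1 : a ≤ 1) (hr0 : 0 ≤ r)
    (hr1 : r < 1) :
    ∑' n : ℕ, ‖mobiusCoeff a (n + 1)‖ ^ 2 * r ^ (2 * (n + 1))
      = (1 - a ^ 2) ^ 2 * r ^ 2 / (1 - a ^ 2 * r ^ 2) := by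
  have hterm (n : ℕ) : ‖mobiusCoeff a (n + 1)‖ ^ 2 * r ^ (2 * (n + 1))
      = (1 - a ^ 2) ^ 2 * r ^ 2 * (a ^ 2 * r ^ 2) ^ n := by
    rw [norm_mobiusCoeff_succ ha0 ha1]
    ring
  rw [tsum_congr hterm, tsum_mul_left,
    tsum_geometric_of_lt_one (by positivity) (by nlinarith [pow_le_one₀ ha0 ha1 (n := 2)]),
    div_eq_mul_inv]

end RealParameter

/-- The left-hand side of the inequality for `f_a` and `ω(z) = z ^ m` at `z = r`, where
`c = r ^ m`. -/
noncomputable def mobiusBohrFunctional (p lam c r a : ℝ) : ℝ :=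
  ((c + a) / (1 + a * c)) ^ p
    + lam * ((1 - a ^ 2) * r / (1 - a * r)
      + (1 / (1 + a) + r / (1 - r)) * ((1 - a ^ 2) ^ 2 * r ^ 2 / (1 - a ^ 2 * r ^ 2)))

theorem mobiusBohrFunctional_one {c : ℝ} (hc : 0 ≤ c) (p lam r : ℝ) :
    mobiusBohrFunctional p lam c r 1 = 1 := by
  rw [mobiusBohrFunctional, one_mul, add_comm c, div_self (by positivity)]
  norm_num

theorem hasDerivAt_mobius_rpow_one {c : ℝ} (hc : 1 + c ≠ 0) (p : ℝ) :
    HasDerivAt (fun a : ℝ => ((c + a) / (1 + a * c)) ^ p) (p * ((1 - c) / (1 + c))) 1 := by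
  have hval : (c + 1) / (1 + 1 * c) = 1 := by
    rw [one_mul, add_comm]
    exact div_self hc
  have hmob : HasDerivAt (fun a : ℝ => (c + a) / (1 + a * c)) ((1 - c) / (1 + c)) 1 := by
    have hnum : HasDerivAt (fun a : ℝ => c + a) 1 1 := (hasDerivAt_id 1).const_add c
    have hden : HasDerivAt (fun a : ℝ => 1 + a * c) c 1 := by
      simpa using ((hasDerivAt_id 1).mul_const c).const_add 1
    refine (hnum.div hden (by simpa [add_comm] using hc)).congr_deriv ?_
    field_simp
    ring
  convert hmob.rpow_const (p := p) (Or.inl (by rw [hval]; norm_num)) using 1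
  rw [hval, Real.one_rpow, mul_one, mul_comm]

theorem hasDerivAt_bohrSum_mobius_one {r : ℝ} (hr : r ≠ 1) :
    HasDerivAt (fun a : ℝ => (1 - a ^ 2) * r / (1 - a * r)) (-(2 * (r / (1 - r)))) 1 := by
  have hnum : HasDerivAt (fun a : ℝ => (1 - a ^ 2) * r) (-(2 * 1 ^ 1) * r) 1 :=
    ((hasDerivAt_pow 2 1).const_sub 1).mul_const r
  have hden : HasDerivAt (fun a : ℝ => 1 - a * r) (-(1 * r)) 1 :=
    ((hasDerivAt_id 1).mul_const r).const_sub 1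
  have hr' : 1 - r ≠ 0 := sub_ne_zero.mpr (Ne.symm hr)
  refine (hnum.div hden (by simpa using hr')).congr_deriv ?_
  field_simp
  ring

theorem hasDerivAt_bohrSquareSum_mobius_one {r : ℝ} (hr : r ^ 2 ≠ 1) :
    HasDerivAt (fun a : ℝ => (1 / (1 + a) + r / (1 - r)) *
      ((1 - a ^ 2) ^ 2 * r ^ 2 / (1 - a ^ 2 * r ^ 2))) 0 1 := by
  -- `(1 - a ^ 2) ^ 2` vanishes to second order at `a = 1`.
  have hweight : DifferentiableAt ℝ (fun a : ℝ => 1 / (1 + a) + r / (1 - r)) 1 := by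
    fun_prop (disch := norm_num)
  have hnum : HasDerivAt (fun a : ℝ => (1 - a ^ 2) ^ 2 * r ^ 2) 0 1 := by
    refine ((((hasDerivAt_pow 2 (1 : ℝ)).const_sub 1).pow 2).mul_const (r ^ 2)).congr_deriv ?_
    norm_num
  have hden : HasDerivAt (fun a : ℝ => 1 - a ^ 2 * r ^ 2) (-(2 * 1 ^ 1 * r ^ 2)) 1 :=
    ((hasDerivAt_pow 2 1).mul_const (r ^ 2)).const_sub 1
  have hden1 : 1 - (1 : ℝ) ^ 2 * r ^ 2 ≠ 0 := by
    rw [one_pow, one_mul, sub_ne_zero]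
    exact hr.symm
  refine (hweight.hasDerivAt.mul (hnum.div hden hden1)).congr_deriv ?_
  norm_num

theorem hasDerivAt_mobiusBohrFunctional_one {c r : ℝ} (hc : 0 ≤ c) (hr0 : 0 ≤ r) (hr1 : r < 1)
    (p lam : ℝ) :
    HasDerivAt (mobiusBohrFunctional p lam c r)
      (p * ((1 - c) / (1 + c)) - 2 * lam * (r / (1 - r))) 1 := by
  have hr2 : r ^ 2 ≠ 1 := by nlinarith
  refine ((hasDerivAt_mobius_rpow_one (by positivity) p).add
    (((hasDerivAt_bohrSum_mobius_one hr1.ne).add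
      (hasDerivAt_bohrSquareSum_mobius_one hr2)).const_mul lam)).congr_deriv ?_
  ring

theorem exists_one_lt_mobiusBohrFunctional {p lam c r : ℝ} (hc : 0 ≤ c) (hr0 : 0 ≤ r)
    (hr1 : r < 1) (hneg : p * ((1 - c) / (1 + c)) - 2 * lam * (r / (1 - r)) < 0) :
    ∃ a ∈ Ioo (0 : ℝ) 1, 1 < mobiusBohrFunctional p lam c r a := by
  simpa only [mobiusBohrFunctional_one hc] using
    (hasDerivAt_mobiusBohrFunctional_one hc hr0 hr1 p lam).exists_lt_of_deriv_neg_left hneg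
      zero_lt_one

theorem stmt_9_general
    (m : ℕ) (p : ℝ) (hp0 : 0 < p)
    (lam : ℝ) (hlam : 0 < lam)
    -- R the minimal root in [0,1] of p(1-r^m)/(1+r^m) - 2λ r/(1-r) = 0
    (R : ℝ) (hR : R ∈ Set.Icc (0:ℝ) 1)
    (hroot : p * ((1 - R ^ m) / (1 + R ^ m)) - 2 * lam * (R / (1 - R)) = 0) :
    ∀ r : ℝ, R < r → r < 1 →
      ∃ (f : ℂ → ℂ) (a : ℕ → ℂ) (ω : ℂ → ℂ) (z : ℂ),
        (∀ w ∈ Metric.ball (0:ℂ) 1, HasSum (fun n => a n * w ^ n) (f w)) ∧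
        (∀ w ∈ Metric.ball (0:ℂ) 1, ‖f w‖ ≤ 1) ∧
        DifferentiableOn ℂ ω (Metric.ball (0:ℂ) 1) ∧
        (∀ w ∈ Metric.ball (0:ℂ) 1, ‖ω w‖ ≤ 1) ∧
        (∀ k < m, iteratedDeriv k ω 0 = 0) ∧
        iteratedDeriv m ω 0 ≠ 0 ∧
        z ∈ Metric.ball (0:ℂ) 1 ∧ ‖z‖ = r ∧
        1 < ‖f (ω z)‖ ^ p
          + lam * ((∑' n : ℕ, ‖a (n + 1)‖ * r ^ (n + 1))
              + (1 / (1 + ‖a 0‖) + r / (1 - r)) *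
                  ∑' n : ℕ, ‖a (n + 1)‖ ^ 2 * r ^ (2 * (n + 1))) := by
  intro r hRr hr1
  have hr0 : 0 < r := hR.1.trans_lt hRr
  have hneg : p * ((1 - r ^ m) / (1 + r ^ m)) - 2 * lam * (r / (1 - r)) < 0 :=
    hroot ▸ strictAntiOn_radiusEquation m hp0.le hlam ⟨hR.1, hRr.trans hr1⟩ ⟨hr0.le, hr1⟩ hRr
  obtain ⟨a, ⟨ha0, ha1⟩, hFa⟩ :=
    exists_one_lt_mobiusBohrFunctional (pow_nonneg hr0.le m) hr0.le hr1 hneg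
  have hfr : ‖((r : ℂ) ^ m + a) / (1 + a * (r : ℂ) ^ m)‖ = (r ^ m + a) / (1 + a * r ^ m) := by
    rw [← Complex.ofReal_pow, ← Complex.ofReal_add, ← Complex.ofReal_mul, ← Complex.ofReal_one,
      ← Complex.ofReal_add, ← Complex.ofReal_div, Complex.norm_of_nonneg (by positivity)]
  refine ⟨fun w => (w + a) / (1 + a * w), mobiusCoeff a, (· ^ m), r,
    fun w hw => hasSum_mobiusCoeff (by simpa [abs_of_pos ha0] using ha1.le)
      (mem_ball_zero_iff.mp hw),
    fun w hw => norm_mobius_le_one (abs_le.mpr ⟨by linarith, ha1.le⟩) (mem_ball_zero_iff.mp hw),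
    (differentiable_pow m).differentiableOn,
    fun w hw => by simpa using pow_le_one₀ (norm_nonneg w) (mem_ball_zero_iff.mp hw).le,
    fun k hk => by simp [Nat.sub_ne_zero_of_lt hk], by simp,
    by simpa [abs_of_pos hr0] using hr1, by simp [abs_of_pos hr0], ?_⟩
  rw [tsum_norm_mobiusCoeff_mul_pow ha0.le ha1.le hr0.le hr1,
    tsum_sq_norm_mobiusCoeff_mul_pow ha0.le ha1.le hr0.le hr1, hfr, mobiusCoeff,
    Complex.norm_real, Real.norm_of_nonneg ha0.le]
  exact hFa

/-- Theorem 5 of the paper, sharpness part.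
With `R_{λ,m}` the minimal root in `[0,1]` of `p(1−r^m)/(1+r^m) − 2λr/(1−r) = 0`,
for every `r` with `R_{λ,m} < r < 1` there exist `f ∈ ℬ`, `ω ∈ ℬ_m` and `z` with
`|z| = r` such that `|f(ω(z))|^p + λ[B₁(f,r) + A(f₀,r)] > 1`. -/
theorem stmt_9
    (m : ℕ) (hm : 1 ≤ m) (p : ℝ) (hp0 : 0 < p) (hp2 : p ≤ 2)
    (lam : ℝ) (hlam : 0 < lam)
    -- R the minimal root in [0,1] of p(1-r^m)/(1+r^m) - 2λ r/(1-r) = 0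
    (R : ℝ) (hR : R ∈ Set.Icc (0:ℝ) 1)
    (hroot : p * ((1 - R ^ m) / (1 + R ^ m)) - 2 * lam * (R / (1 - R)) = 0)
    (hmin : ∀ r ∈ Set.Icc (0:ℝ) 1,
      p * ((1 - r ^ m) / (1 + r ^ m)) - 2 * lam * (r / (1 - r)) = 0 → R ≤ r) :
    ∀ r : ℝ, R < r → r < 1 →
      ∃ (f : ℂ → ℂ) (a : ℕ → ℂ) (ω : ℂ → ℂ) (z : ℂ),
        (∀ w ∈ Metric.ball (0:ℂ) 1, HasSum (fun n => a n * w ^ n) (f w)) ∧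
        (∀ w ∈ Metric.ball (0:ℂ) 1, ‖f w‖ ≤ 1) ∧
        DifferentiableOn ℂ ω (Metric.ball (0:ℂ) 1) ∧
        (∀ w ∈ Metric.ball (0:ℂ) 1, ‖ω w‖ ≤ 1) ∧
        (∀ k < m, iteratedDeriv k ω 0 = 0) ∧
        iteratedDeriv m ω 0 ≠ 0 ∧
        z ∈ Metric.ball (0:ℂ) 1 ∧ ‖z‖ = r ∧
        1 < ‖f (ω z)‖ ^ p
          + lam * ((∑' n : ℕ, ‖a (n + 1)‖ * r ^ (n + 1))
              + (1 / (1 + ‖a 0‖) + r / (1 - r)) *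
                  ∑' n : ℕ, ‖a (n + 1)‖ ^ 2 * r ^ (2 * (n + 1))) :=
  stmt_9_general m p hp0 lam hlam R hR hroot
end

section
/- Let f(z) = Σ_{n=1}^∞ a_n z^n be a Schwarz function (analytic on 𝔻, |f(z)| ≤ 1, f(0) = 0). Then for every n ≥ 1, one has |a_{n+1}| ≤ 1 − |a₁|². -/
/-!
By Schwarz's lemma, `g = dslope f 0` (that is, `f z / z`) is bounded by `1`, with coefficients
`a (k + 1)`. Averaging `g` over the `n`-th roots of unity, `(1 / n) ∑ⱼ g (ζ ^ j z)` with `ζ`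
primitive, keeps exactly the terms of index divisible by `n`, so it equals `h (z ^ n)` with `h`
bounded by `1`, `h 0 = a 1` and `h' 0 = a (n + 1)`. The claim is then the Schwarz–Pick bound
`‖h' 0‖ ≤ 1 - ‖h 0‖ ^ 2`: compose `h` with the disk automorphism
`u ↦ (u - h 0) / (1 - conj (h 0) * u)` and apply Schwarz's lemma, or use the maximum modulus
principle when `‖h 0‖ = 1`.
-/

open Metric Set Complex Finset ComplexConjugate Real

theorem Metric.eball_one {α : Type*} [PseudoMetricSpace α] (x : α) : eball x 1 = ball x 1 := by
  rw [← ENNReal.coe_one, eball_coe, NNReal.coe_one]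

theorem hasSum_mul_zero_pow (b : ℕ → ℂ) : HasSum (fun k => b k * 0 ^ k) (b 0) := by
  simpa using hasSum_single (f := fun k => b k * (0 : ℂ) ^ k) 0 fun k hk => by simp [hk]

section PowerSeries

variable {u : ℂ → ℂ} {b : ℕ → ℂ}

theorem hasFPowerSeriesOnBall_ofScalars_of_hasSum
    (hu : ∀ z ∈ ball (0 : ℂ) 1, HasSum (fun k => b k * z ^ k) (u z)) :
    HasFPowerSeriesOnBall u (FormalMultilinearSeries.ofScalars ℂ b) 0 1 where
  r_le := by
    refine ENNReal.le_of_forall_nnreal_lt fun r hr => ?_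
    have hr : ((r : ℝ) : ℂ) ∈ ball (0 : ℂ) 1 := by
      simpa [abs_of_nonneg r.coe_nonneg] using (show (r : ℝ) < 1 by exact_mod_cast hr)
    refine FormalMultilinearSeries.le_radius_of_summable_norm _ ?_
    simpa [FormalMultilinearSeries.ofScalars_norm, abs_of_nonneg r.coe_nonneg] using
      (hu _ hr).summable.norm
  r_pos := one_pos
  hasSum {y} hy := by
    rw [eball_one] at hy
    simpa [FormalMultilinearSeries.ofScalars_apply_eq, mul_comm] using hu y hy

theorem differentiableOn_ball_of_hasSum
    (hu : ∀ z ∈ ball (0 : ℂ) 1, HasSum (fun k => b k * z ^ k) (u z)) :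
    DifferentiableOn ℂ u (ball 0 1) := by
  simpa [eball_one] using (hasFPowerSeriesOnBall_ofScalars_of_hasSum hu).differentiableOn

theorem deriv_zero_eq_of_hasSum
    (hu : ∀ z ∈ ball (0 : ℂ) 1, HasSum (fun k => b k * z ^ k) (u z)) :
    deriv u 0 = b 1 := by
  simp [(hasFPowerSeriesOnBall_ofScalars_of_hasSum hu).hasFPowerSeriesAt.deriv]

end PowerSeries

theorem norm_sub_le_norm_one_sub_conj_mul {p u : ℂ} (hp : ‖p‖ ≤ 1) (hu : ‖u‖ ≤ 1) :
    ‖u - p‖ ≤ ‖1 - conj p * u‖ := by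
  have key : ‖1 - conj p * u‖ ^ 2 - ‖u - p‖ ^ 2 = (1 - ‖p‖ ^ 2) * (1 - ‖u‖ ^ 2) := by
    apply ofReal_injective
    push_cast
    simp only [← conj_mul', map_sub, map_mul, map_one, conj_conj]
    ring
  have hprod : 0 ≤ (1 - ‖p‖ ^ 2) * (1 - ‖u‖ ^ 2) := by
    apply mul_nonneg <;> nlinarith [norm_nonneg p, norm_nonneg u]
  exact (pow_le_pow_iff_left₀ (norm_nonneg _) (norm_nonneg _) two_ne_zero).mp (by linarith)

theorem hasDerivAt_moebius {p : ℂ} (hp : ‖p‖ < 1) :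
    HasDerivAt (fun u => (u - p) / (1 - conj p * u)) (1 - ‖p‖ ^ 2 : ℂ)⁻¹ p := by
  have hden : 1 - conj p * p = 1 - ‖p‖ ^ 2 := by rw [conj_mul']
  have hne : (1 - ‖p‖ ^ 2 : ℂ) ≠ 0 := by
    exact_mod_cast (by nlinarith [norm_nonneg p] : (1 - ‖p‖ ^ 2 : ℝ) ≠ 0)
  refine (((hasDerivAt_id p).sub_const p).div
    (((hasDerivAt_id p).const_mul (conj p)).const_sub 1) (hden ▸ hne)).congr_deriv ?_
  simp only [id, sub_self, zero_mul, sub_zero, one_mul, hden]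
  field_simp

theorem deriv_zero_eq_zero_of_norm_eq_one {H : ℂ → ℂ} (hd : DifferentiableOn ℂ H (ball 0 1))
    (hH : MapsTo H (ball 0 1) (closedBall 0 1)) (h0 : ‖H 0‖ = 1) : deriv H 0 = 0 := by
  have hconst : EqOn H (Function.const ℂ (H 0)) (ball 0 1) :=
    eqOn_of_isPreconnected_of_isMaxOn_norm (convex_ball 0 1).isPreconnected isOpen_ball hd
      (mem_ball_self one_pos) fun z hz => by simpa [h0] using hH hz
  rw [(hconst.eventuallyEq_of_mem (ball_mem_nhds 0 one_pos)).deriv_eq]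
  exact deriv_const _ _

theorem norm_deriv_zero_le_one_sub_sq_of_norm_lt_one {H : ℂ → ℂ}
    (hd : DifferentiableOn ℂ H (ball 0 1)) (hH : MapsTo H (ball 0 1) (closedBall 0 1))
    (h0 : ‖H 0‖ < 1) : ‖deriv H 0‖ ≤ 1 - ‖H 0‖ ^ 2 := by
  set p := H 0
  set φ : ℂ → ℂ := fun u => (u - p) / (1 - conj p * u)
  have hden : ∀ z ∈ ball (0 : ℂ) 1, 1 - conj p * H z ≠ 0 := by
    intro z hz
    refine sub_ne_zero.mpr fun h => ?_
    have : ‖conj p * H z‖ < 1 := by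
      rw [norm_mul, RCLike.norm_conj]
      exact lt_of_le_of_lt (mul_le_of_le_one_right (norm_nonneg _) (by simpa using hH hz)) h0
    simp [← h] at this
  have hdiff : DifferentiableOn ℂ (φ ∘ H) (ball 0 1) :=
    (hd.sub_const p).div ((differentiableOn_const 1).sub (hd.const_mul _)) hden
  have hmaps : MapsTo (φ ∘ H) (ball 0 1) (closedBall ((φ ∘ H) 0) 1) := by
    intro z hz
    simp only [Function.comp_apply, φ, p, sub_self, zero_div, mem_closedBall_zero_iff, norm_div]
    exact div_le_one_of_le₀ (norm_sub_le_norm_one_sub_conj_mul h0.le (by simpa using hH hz))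
      (norm_nonneg _)
  have hderiv : deriv (φ ∘ H) 0 = (1 - ‖p‖ ^ 2 : ℂ)⁻¹ * deriv H 0 :=
    ((hasDerivAt_moebius h0).comp 0
      (hd.differentiableAt (ball_mem_nhds 0 one_pos)).hasDerivAt).deriv
  have hpos : 0 < 1 - ‖p‖ ^ 2 := by nlinarith [norm_nonneg p]
  have := norm_deriv_le_one_of_mapsTo_ball hdiff hmaps one_pos
  rw [hderiv, norm_mul, norm_inv, ← ofReal_pow, ← ofReal_one, ← ofReal_sub, norm_real,
    Real.norm_of_nonneg hpos.le, inv_mul_le_iff₀ hpos, mul_one] at this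
  exact this

theorem norm_deriv_zero_le_one_sub_sq {H : ℂ → ℂ} (hd : DifferentiableOn ℂ H (ball 0 1))
    (hH : MapsTo H (ball 0 1) (closedBall 0 1)) : ‖deriv H 0‖ ≤ 1 - ‖H 0‖ ^ 2 := by
  rcases (show ‖H 0‖ ≤ 1 by simpa using hH (mem_ball_self one_pos)).lt_or_eq with h0 | h0
  · exact norm_deriv_zero_le_one_sub_sq_of_norm_lt_one hd hH h0
  · simp [deriv_zero_eq_zero_of_norm_eq_one hd hH h0, h0]

theorem IsPrimitiveRoot.sum_pow_pow_eq {R : Type*} [CommRing R] [IsDomain R] {ζ : R} {n : ℕ}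
    (hζ : IsPrimitiveRoot ζ n) (k : ℕ) :
    ∑ j ∈ range n, (ζ ^ j) ^ k = if n ∣ k then (n : R) else 0 := by
  simp_rw [← pow_mul, mul_comm _ k, pow_mul]
  split_ifs with h
  · simp [(hζ.pow_eq_one_iff_dvd k).mpr h]
  · have hne : ζ ^ k - 1 ≠ 0 := sub_ne_zero.mpr (mt (hζ.pow_eq_one_iff_dvd k).mp h)
    have : (ζ ^ k - 1) * ∑ j ∈ range n, (ζ ^ k) ^ j = 0 := by
      rw [mul_geom_sum, ← pow_mul, mul_comm, pow_mul, hζ.pow_eq_one, one_pow, sub_self]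
    exact (mul_eq_zero.mp this).resolve_left hne

theorem IsPrimitiveRoot.hasSum_coeff_mul {c s : ℕ → ℂ} {n : ℕ} {ζ z : ℂ}
    (hζ : IsPrimitiveRoot ζ n) (hn : n ≠ 0)
    (hs : ∀ j, HasSum (fun k => c k * (ζ ^ j * z) ^ k) (s j)) :
    HasSum (fun m => c (m * n) * (z ^ n) ^ m) ((n : ℂ)⁻¹ * ∑ j ∈ range n, s j) := by
  have hsum : HasSum (fun k => c k * z ^ k * if n ∣ k then (n : ℂ) else 0)
      (∑ j ∈ range n, s j) := by
    convert hasSum_sum fun j _ => hs j using 1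
    ext k
    rw [← hζ.sum_pow_pow_eq k, mul_sum]
    exact sum_congr rfl fun j _ => by ring
  have hinj : Function.Injective fun m => m * n := mul_left_injective₀ hn
  have hzero : ∀ k ∉ Set.range fun m => m * n,
      (c k * z ^ k * if n ∣ k then (n : ℂ) else 0) = 0 := by
    rintro k hk
    rw [if_neg fun ⟨m, hm⟩ => hk ⟨m, by rw [hm, mul_comm]⟩, mul_zero]
  have hn' : (n : ℂ) ≠ 0 := Nat.cast_ne_zero.mpr hn
  have := ((hinj.hasSum_iff hzero).mpr hsum).mul_left (n : ℂ)⁻¹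
  simpa [← pow_mul, mul_comm n, hn', inv_mul_cancel_left₀, mul_comm _ (n : ℂ)] using this

/-- `∑ b k z ^ k` converges on the unit disk to a function of modulus at most `1`, i.e. `b` is the
coefficient sequence of a function in the Schur class. -/
def IsSchurSeries (b : ℕ → ℂ) : Prop :=
  ∃ u : ℂ → ℂ, ∀ z ∈ ball (0 : ℂ) 1, HasSum (fun k => b k * z ^ k) (u z) ∧ ‖u z‖ ≤ 1

namespace IsSchurSeries

variable {b : ℕ → ℂ}

theorem norm_coeff_one_le (hb : IsSchurSeries b) : ‖b 1‖ ≤ 1 - ‖b 0‖ ^ 2 := by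
  obtain ⟨u, hu⟩ := hb
  have hsum := fun z hz => (hu z hz).1
  have hmaps : MapsTo u (ball 0 1) (closedBall 0 1) :=
    fun z hz => mem_closedBall_zero_iff.mpr (hu z hz).2
  have hu0 : u 0 = b 0 := (hsum 0 (mem_ball_self one_pos)).unique (hasSum_mul_zero_pow b)
  rw [← deriv_zero_eq_of_hasSum hsum, ← hu0]
  exact norm_deriv_zero_le_one_sub_sq (differentiableOn_ball_of_hasSum hsum) hmaps

theorem shift (hb : IsSchurSeries b) (h0 : b 0 = 0) : IsSchurSeries fun k => b (k + 1) := by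
  obtain ⟨u, hu⟩ := hb
  have hsum := fun z hz => (hu z hz).1
  have hu0 : u 0 = 0 := h0 ▸ (hsum 0 (mem_ball_self one_pos)).unique (hasSum_mul_zero_pow b)
  have hmaps : MapsTo u (ball 0 1) (closedBall (u 0) 1) :=
    fun z hz => by simpa [hu0] using (hu z hz).2
  refine ⟨dslope u 0, fun z hz => ⟨?_, ?_⟩⟩
  · rcases eq_or_ne z 0 with rfl | hz0
    · rw [dslope_same, deriv_zero_eq_of_hasSum hsum]
      simpa using hasSum_mul_zero_pow fun k => b (k + 1)
    · have := ((hasSum_nat_add_iff' 1).mpr (hsum z hz)).mul_left z⁻¹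
      rw [dslope_of_ne _ hz0, slope_def_module, hu0, sub_zero, sub_zero, smul_eq_mul]
      simp only [range_one, sum_singleton, h0, zero_mul, sub_zero] at this
      have hterm : ∀ k, z⁻¹ * (b (k + 1) * z ^ (k + 1)) = b (k + 1) * z ^ k :=
        fun k => by field_simp; ring
      simpa only [hterm] using this
  · simpa using norm_dslope_le_div_of_mapsTo_ball (differentiableOn_ball_of_hasSum hsum) hmaps hz

theorem comp_mul (hb : IsSchurSeries b) {n : ℕ} (hn : n ≠ 0) :
    IsSchurSeries fun k => b (k * n) := by
  obtain ⟨u, hu⟩ := hb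
  refine ⟨fun w => ∑' m, b (m * n) * w ^ m, fun w hw => ?_⟩
  obtain ⟨z, rfl⟩ := IsAlgClosed.exists_pow_nat_eq w (Nat.pos_of_ne_zero hn)
  have hz : ‖z‖ < 1 := by
    rwa [mem_ball_zero_iff, norm_pow, pow_lt_one_iff_of_nonneg (norm_nonneg _) hn] at hw
  set ζ : ℂ := exp (2 * π * I / n)
  have hζ : IsPrimitiveRoot ζ n := isPrimitiveRoot_exp n hn
  have hmem : ∀ j, ζ ^ j * z ∈ ball 0 1 := fun j => by
    simpa [norm_mul, hζ.norm'_eq_one hn] using hz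
  have hsum := hζ.hasSum_coeff_mul hn fun j => (hu _ (hmem j)).1
  refine ⟨hsum.summable.hasSum, ?_⟩
  beta_reduce
  rw [hsum.tsum_eq, norm_mul, norm_inv, Complex.norm_natCast,
    inv_mul_le_iff₀ (Nat.cast_pos.mpr (Nat.pos_of_ne_zero hn)), mul_one]
  calc ‖∑ j ∈ range n, u (ζ ^ j * z)‖
      ≤ ∑ j ∈ range n, ‖u (ζ ^ j * z)‖ := norm_sum_le _ _
    _ ≤ ∑ _j ∈ range n, (1 : ℝ) := sum_le_sum fun j _ => (hu _ (hmem j)).2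
    _ = n := by simp

end IsSchurSeries

/-- coefficient estimate used in the proofs of Theorems 3 and 4.
For a Schwarz function `f(z) = Σ_{n≥1} a_n z^n`, one has
`|a_{n+1}| ≤ 1 − |a₁|²` for every `n ≥ 1`. -/
theorem stmt_17
    (f : ℂ → ℂ) (a : ℕ → ℂ) (ha0 : a 0 = 0)
    (hf : ∀ z ∈ Metric.ball (0:ℂ) 1, HasSum (fun n => a n * z ^ n) (f z))
    (hfb : ∀ z ∈ Metric.ball (0:ℂ) 1, ‖f z‖ ≤ 1) :
    ∀ n : ℕ, 1 ≤ n → ‖a (n + 1)‖ ≤ 1 - ‖a 1‖ ^ 2 := by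
  intro n hn
  have ha : IsSchurSeries a := ⟨f, fun z hz => ⟨hf z hz, hfb z hz⟩⟩
  simpa using ((ha.shift ha0).comp_mul (n := n) (by omega)).norm_coeff_one_le
end
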